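/- (Angle master equation.) Let λ̃ > 0 be a simple eigenvalue of ỸᵀỸ with unit eigenvector ξ̃ ∈ ℝ^p, and let Γ be a positively oriented simple closed contour in ℂ ∖ (−∞, 0] such that: λ̃ is the only eigenvalue of ỸᵀỸ inside Γ; no eigenvalue of X̃ᵀX̃ lies inside or on Γ; and 𝒟^{−1} + z^{1/2}·AᵀG(z)A is invertible for every z on Γ. Then for every 1 ≤ j ≤ k, |⟨u_j, ξ̃⟩|² = (1/(2πi·λ̃^{1/2}))·∮_Γ e_jᵀ·𝒟^{−1}·(𝒟^{−1} + z^{1/2}·AᵀG(z)A)^{−1}·𝒟^{−1}·e_j dz, where e_j ∈ ℝ^{2k} is the j-th standard basis vector and u_j is the j-th column of U. -/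

import Mathlib

/-!
With `H(X) = [[0, Xᵀ], [X, 0]]`, the resolvent `G(z)` inverts the linearization
`B_X(z) = z^{1/2} H(X̃) - z`, and `H(Ỹ) = H(X̃) + A 𝒟 Aᵀ`. The Woodbury identity, read in
the direction of the capacitance matrix `𝒟⁻¹ + z^{1/2} Aᵀ G(z) A`, shows that `B_Ỹ(z)` is
invertible on `Γ` and that `𝒟⁻¹ (𝒟⁻¹ + z^{1/2} Aᵀ G(z) A)⁻¹ 𝒟⁻¹ = 𝒟⁻¹ - z^{1/2} Aᵀ B_Ỹ(z)⁻¹ A`.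
The `(j, j)` entry of `𝒟⁻¹` vanishes, and by a Schur complement the upper-left block of
`B_Ỹ(z)⁻¹` is `(ỸᵀỸ - z)⁻¹`; so the integrand is `z^{1/2} Σᵢ ⟨u_j, ξᵢ⟩² / (z - λᵢ)` over an
orthonormal eigenbasis of `ỸᵀỸ`. By Cauchy's formula only the poles inside `Γ` survive, each
with residue `⟨u_j, ξᵢ⟩² λᵢ^{1/2}`, and by simplicity the only one is `λ̃`, with `ξᵢ = ±ξ̃`.
-/

open Matrix Metric

/-- The resolvent `G(z) = (z^{1/2} [[0, X̃ᵀ],[X̃, 0]] − z I)⁻¹` of the linearization,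
over `ℂ` (principal branch of the square root). -/
noncomputable def linG {p r : ℕ} (XtC : Matrix (Fin r) (Fin p) ℂ) (z : ℂ) :
    Matrix (Fin p ⊕ Fin r) (Fin p ⊕ Fin r) ℂ :=
  (z ^ (1 / 2 : ℂ) • Matrix.fromBlocks 0 XtCᵀ XtC 0 - z • 1)⁻¹

/-- The complexified `𝒟 = [[0, D],[D, 0]]`. -/
noncomputable def dBlockC {k : ℕ} (d : Fin k → ℝ) :
    Matrix (Fin k ⊕ Fin k) (Fin k ⊕ Fin k) ℂ :=
  (Matrix.fromBlocks 0 (Matrix.diagonal d) (Matrix.diagonal d) 0 :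
    Matrix (Fin k ⊕ Fin k) (Fin k ⊕ Fin k) ℝ).map Complex.ofReal

/-- The complexified `A = [[U, 0],[0, V]]`. -/
noncomputable def aBlockC {p r k : ℕ}
    (U : Matrix (Fin p) (Fin k) ℝ) (V : Matrix (Fin r) (Fin k) ℝ) :
    Matrix (Fin p ⊕ Fin r) (Fin k ⊕ Fin k) ℂ :=
  (Matrix.fromBlocks U 0 0 V).map Complex.ofReal

/-- The master matrix `𝒟⁻¹ + z^{1/2} Aᵀ G(z) A`. -/
noncomputable def masterM {p r k : ℕ} (Xt : Matrix (Fin r) (Fin p) ℝ)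
    (U : Matrix (Fin p) (Fin k) ℝ) (V : Matrix (Fin r) (Fin k) ℝ)
    (d : Fin k → ℝ) (z : ℂ) : Matrix (Fin k ⊕ Fin k) (Fin k ⊕ Fin k) ℂ :=
  (dBlockC d)⁻¹ +
    z ^ (1 / 2 : ℂ) •
      ((aBlockC U V)ᵀ * linG (Xt.map Complex.ofReal) z * aBlockC U V)

namespace Matrix

section SchurScalar

variable {K : Type*} [Field K] {m n : Type*} [Fintype n] [DecidableEq n]
  (A : Matrix m m K) (B : Matrix m n K) (C : Matrix n m K) {c : K}

lemma smul_one_mul_inv_smul_one (hc : c ≠ 0) : (c • 1 : Matrix n n K) * (c⁻¹ • 1) = 1 := by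
  rw [smul_mul_smul_comm, mul_inv_cancel₀ hc, one_mul, one_smul]

lemma sub_mul_invOf_smul_one_mul (hc : c ≠ 0) [Invertible (c • 1 : Matrix n n K)] :
    A - B * ⅟(c • 1 : Matrix n n K) * C = A - c⁻¹ • (B * C) := by
  rw [invOf_eq_right_inv (smul_one_mul_inv_smul_one hc), Matrix.mul_smul, Matrix.mul_one,
    Matrix.smul_mul]

variable [Fintype m] [DecidableEq m]

theorem det_fromBlocks_smul_one₂₂ (hc : c ≠ 0) :
    (fromBlocks A B C (c • 1)).det = c ^ Fintype.card n * (A - c⁻¹ • (B * C)).det := by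
  let _ := invertibleOfRightInverse _ _ (smul_one_mul_inv_smul_one (n := n) hc)
  rw [det_fromBlocks₂₂, sub_mul_invOf_smul_one_mul A B C hc, det_smul, det_one, mul_one]

theorem isUnit_fromBlocks_smul_one₂₂_iff (hc : c ≠ 0) :
    IsUnit (fromBlocks A B C (c • 1)) ↔ IsUnit (A - c⁻¹ • (B * C)) := by
  simp only [isUnit_iff_isUnit_det, det_fromBlocks_smul_one₂₂ A B C hc, isUnit_iff_ne_zero,
    ne_eq, mul_eq_zero, pow_eq_zero_iff', hc, false_and, false_or]

theorem toBlocks₁₁_inv_fromBlocks_smul_one₂₂ (hc : c ≠ 0) :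
    (fromBlocks A B C (c • 1))⁻¹.toBlocks₁₁ = (A - c⁻¹ • (B * C))⁻¹ := by
  by_cases h : IsUnit (A - c⁻¹ • (B * C))
  · let _ := invertibleOfRightInverse _ _ (smul_one_mul_inv_smul_one (n := n) hc)
    rw [← sub_mul_invOf_smul_one_mul A B C hc] at h ⊢
    let _ := h.invertible
    let _ := fromBlocks₂₂Invertible A B C (c • 1)
    rw [← invOf_eq_nonsing_inv, invOf_fromBlocks₂₂_eq, toBlocks_fromBlocks₁₁,
      invOf_eq_nonsing_inv]
  · have h' := mt (isUnit_fromBlocks_smul_one₂₂_iff A B C hc).mp h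
    rw [nonsing_inv_apply_not_isUnit _ (mt (isUnit_iff_isUnit_det _).mpr h'),
      nonsing_inv_apply_not_isUnit _ (mt (isUnit_iff_isUnit_det _).mpr h)]
    rfl

end SchurScalar

section Woodbury

variable {K : Type*} [Field K] {m n : Type*} [Fintype m] [Fintype n] [DecidableEq m]
  [DecidableEq n] (B : Matrix m m K) (U : Matrix m n K) (D : Matrix n n K) (V : Matrix n m K)

theorem isUnit_add_mul_mul (hB : IsUnit B) (hD : IsUnit D)
    (hM : IsUnit (D⁻¹ + V * B⁻¹ * U)) : IsUnit (B + U * D * V) := by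
  let _ := hB.invertible
  let _ := hD.invertible
  simp only [← invOf_eq_nonsing_inv] at hM
  let _ := hM.invertible
  let _ := invertibleAddMulMul B U D V
  exact isUnit_of_invertible _

theorem inv_mul_inv_add_mul_inv_mul_inv_mul_inv (hB : IsUnit B) (hD : IsUnit D)
    (hM : IsUnit (D⁻¹ + V * B⁻¹ * U)) :
    D⁻¹ * (D⁻¹ + V * B⁻¹ * U)⁻¹ * D⁻¹ = D⁻¹ - V * (B + U * D * V)⁻¹ * U := by
  set M := D⁻¹ + V * B⁻¹ * U
  have hMdet : IsUnit M.det := (isUnit_iff_isUnit_det M).mp hM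
  have hS : V * B⁻¹ * U = M - D⁻¹ := by simp [M]
  have hVWU : V * (B⁻¹ - B⁻¹ * U * M⁻¹ * V * B⁻¹) * U =
      V * B⁻¹ * U - V * B⁻¹ * U * M⁻¹ * (V * B⁻¹ * U) := by
    simp only [Matrix.mul_sub, Matrix.sub_mul, Matrix.mul_assoc]
  rw [add_mul_mul_inv_eq_sub B U D V hB hD hM, hVWU, hS]
  simp only [Matrix.sub_mul, Matrix.mul_sub, mul_nonsing_inv _ hMdet,
    nonsing_inv_mul_cancel_right _ _ hMdet, Matrix.one_mul]
  abel

end Woodbury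

section Dilation

variable {R : Type*} [CommRing R] {m n k : Type*}

def dilation (X : Matrix n m R) : Matrix (m ⊕ n) (m ⊕ n) R := fromBlocks 0 Xᵀ X 0

lemma dilation_add_mul_mul_transpose [Fintype k] (X : Matrix n m R) (U : Matrix m k R)
    (V : Matrix n k R) (D : Matrix k k R) (hD : Dᵀ = D) :
    dilation (X + V * D * Uᵀ) =
      dilation X + fromBlocks U 0 0 V * fromBlocks 0 D D 0 * (fromBlocks U 0 0 V)ᵀ := by
  simp [dilation, fromBlocks_transpose, fromBlocks_multiply, fromBlocks_add, transpose_mul, hD,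
    Matrix.mul_assoc]

lemma smul_dilation_sub_smul_one [DecidableEq m] [DecidableEq n] (X : Matrix n m R) (w : R) :
    w • dilation X - (w * w) • (1 : Matrix (m ⊕ n) (m ⊕ n) R) =
      fromBlocks (-(w * w) • 1) (w • Xᵀ) (w • X) (-(w * w) • 1) := by
  rw [dilation, ← fromBlocks_one, fromBlocks_smul, fromBlocks_smul, sub_eq_add_neg,
    fromBlocks_neg, fromBlocks_add]
  simp [neg_smul]

end Dilation

lemma transpose_mul_mul_apply_self {R : Type*} [CommRing R] {m k : Type*} [Fintype m]
    (A : Matrix m k R) (W : Matrix m m R) (j : k) :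
    (Aᵀ * W * A) j j = (fun a => A a j) ⬝ᵥ W *ᵥ (fun a => A a j) := by
  simp only [mul_apply, transpose_apply, dotProduct, mulVec, Finset.sum_mul, Finset.mul_sum]
  rw [Finset.sum_comm]
  exact Finset.sum_congr rfl fun a _ => Finset.sum_congr rfl fun b _ => by ring

lemma fromBlocks_transpose_mul_mul_fromBlocks_apply_inl {R : Type*} [CommRing R]
    {m n k l : Type*} [Fintype m] [Fintype n] (U : Matrix m k R) (V : Matrix n l R)
    (W : Matrix (m ⊕ n) (m ⊕ n) R) (j : k) :
    ((fromBlocks U 0 0 V)ᵀ * W * fromBlocks U 0 0 V) (Sum.inl j) (Sum.inl j) =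
      (fun a => U a j) ⬝ᵥ W.toBlocks₁₁ *ᵥ (fun a => U a j) := by
  rw [← fromBlocks_toBlocks W, fromBlocks_transpose, fromBlocks_multiply, fromBlocks_multiply]
  simp [transpose_mul_mul_apply_self]

lemma diagonal_mul_diagonal_inv {n K : Type*} [Fintype n] [DecidableEq n] [Field K]
    {v : n → K} (hv : ∀ i, v i ≠ 0) : diagonal v * diagonal (fun i => (v i)⁻¹) = 1 := by
  rw [diagonal_mul_diagonal, ← diagonal_one]
  exact congrArg diagonal (funext fun i => mul_inv_cancel₀ (hv i))

lemma map_ofReal_mul {l m n : Type*} [Fintype m] (A : Matrix l m ℝ) (B : Matrix m n ℝ) :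
    (A * B).map Complex.ofReal = A.map Complex.ofReal * B.map Complex.ofReal :=
  Matrix.map_mul (f := Complex.ofRealHom)

namespace IsHermitian

variable {n : Type*} [Fintype n] [DecidableEq n] {N : Matrix n n ℝ} (hN : N.IsHermitian)

lemma eigenvectorUnitary_mul_transpose :
    (hN.eigenvectorUnitary : Matrix n n ℝ) * (hN.eigenvectorUnitary : Matrix n n ℝ)ᵀ = 1 := by
  simpa [star_eq_conjTranspose] using Unitary.coe_mul_star_self hN.eigenvectorUnitary

lemma map_ofReal_eigenvectorUnitary_mul_transpose :
    (hN.eigenvectorUnitary : Matrix n n ℝ).map Complex.ofReal *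
      ((hN.eigenvectorUnitary : Matrix n n ℝ).map Complex.ofReal)ᵀ = 1 := by
  rw [← transpose_map, ← map_ofReal_mul, eigenvectorUnitary_mul_transpose]
  simp

lemma map_ofReal_sub_smul_one (z : ℂ) :
    N.map Complex.ofReal - z • 1 =
      (hN.eigenvectorUnitary : Matrix n n ℝ).map Complex.ofReal *
        diagonal (fun i => (hN.eigenvalues i : ℂ) - z) *
          ((hN.eigenvectorUnitary : Matrix n n ℝ).map Complex.ofReal)ᵀ := by
  set O := (hN.eigenvectorUnitary : Matrix n n ℝ)
  have hN' : N = O * diagonal hN.eigenvalues * Oᵀ := by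
    simpa [Unitary.conjStarAlgAut_apply, star_eq_conjTranspose] using hN.spectral_theorem
  have hz : z • (1 : Matrix n n ℂ) =
      O.map Complex.ofReal * diagonal (fun _ => z) * (O.map Complex.ofReal)ᵀ := by
    rw [← smul_one_eq_diagonal, Matrix.mul_smul, Matrix.mul_one, Matrix.smul_mul,
      hN.map_ofReal_eigenvectorUnitary_mul_transpose]
  nth_rw 1 [hN']
  rw [hz, map_ofReal_mul, map_ofReal_mul, transpose_map, ← Matrix.sub_mul, ← Matrix.mul_sub,
    diagonal_map Complex.ofReal_zero, diagonal_sub]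

lemma isUnit_map_ofReal_sub_smul_one_iff (z : ℂ) :
    IsUnit (N.map Complex.ofReal - z • 1) ↔ ∀ i, (hN.eigenvalues i : ℂ) ≠ z := by
  rw [isUnit_iff_isUnit_det, hN.map_ofReal_sub_smul_one, det_mul, det_mul, mul_right_comm,
    ← det_mul, hN.map_ofReal_eigenvectorUnitary_mul_transpose, det_one, one_mul, det_diagonal,
    isUnit_iff_ne_zero, Finset.prod_ne_zero_iff]
  simp [sub_ne_zero]

lemma dotProduct_inv_map_ofReal_sub_smul_one_mulVec (u : n → ℝ) {z : ℂ}
    (hz : ∀ i, (hN.eigenvalues i : ℂ) ≠ z) :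
    (Complex.ofReal ∘ u) ⬝ᵥ (N.map Complex.ofReal - z • 1)⁻¹ *ᵥ (Complex.ofReal ∘ u) =
      ∑ i, ((hN.eigenvalues i : ℂ) - z)⁻¹ * ((⇑(hN.eigenvectorBasis i) ⬝ᵥ u : ℝ) : ℂ) ^ 2 := by
  set O := (hN.eigenvectorUnitary : Matrix n n ℝ)
  have hO := hN.map_ofReal_eigenvectorUnitary_mul_transpose
  have hx : (O.map Complex.ofReal)ᵀ *ᵥ (Complex.ofReal ∘ u) =
      fun i => ((⇑(hN.eigenvectorBasis i) ⬝ᵥ u : ℝ) : ℂ) := by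
    ext i
    simp [mulVec, dotProduct, O]
  rw [hN.map_ofReal_sub_smul_one, mul_inv_rev, mul_inv_rev, inv_eq_left_inv hO,
    inv_eq_right_inv hO,
    inv_eq_right_inv (diagonal_mul_diagonal_inv fun i => sub_ne_zero.mpr (hz i)),
    ← mulVec_mulVec, ← mulVec_mulVec, dotProduct_mulVec, ← mulVec_transpose, hx]
  simp only [dotProduct, mulVec_diagonal]
  exact Finset.sum_congr rfl fun i _ => by ring

lemma dotProduct_eigenvectorBasis (i k : n) :
    ⇑(hN.eigenvectorBasis i) ⬝ᵥ ⇑(hN.eigenvectorBasis k) = if i = k then 1 else 0 := by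
  have h := orthonormal_iff_ite.mp hN.eigenvectorBasis.orthonormal k i
  rw [EuclideanSpace.inner_eq_star_dotProduct] at h
  simpa [eq_comm] using h

lemma exists_eigenvalues_eq {μ : ℝ} {ξ : n → ℝ} (hξ : ξ ≠ 0) (hNξ : N *ᵥ ξ = μ • ξ) :
    ∃ i, hN.eigenvalues i = μ := by
  have hμ : μ ∈ spectrum ℝ N := by
    rw [← Matrix.spectrum_toLin']
    exact (Module.End.hasEigenvalue_of_hasEigenvector
      ⟨Module.End.mem_eigenspace_iff.mpr (by simpa using hNξ), hξ⟩).mem_spectrum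
  rwa [hN.spectrum_real_eq_range_eigenvalues] at hμ

lemma sum_sq_dotProduct_eigenvectorBasis_of_simple {μ : ℝ} {ξ : n → ℝ} (hξ : ξ ⬝ᵥ ξ = 1)
    (hNξ : N *ᵥ ξ = μ • ξ) (hsimple : ∀ v, N *ᵥ v = μ • v → ∃ t : ℝ, v = t • ξ) (u : n → ℝ) :
    ∑ i with hN.eigenvalues i = μ, (⇑(hN.eigenvectorBasis i) ⬝ᵥ u) ^ 2 = (ξ ⬝ᵥ u) ^ 2 := by
  have hcol : ∀ i, hN.eigenvalues i = μ →
      ∃ t : ℝ, t * t = 1 ∧ ⇑(hN.eigenvectorBasis i) = t • ξ := by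
    intro i hi
    obtain ⟨t, ht⟩ := hsimple _ (by rw [hN.mulVec_eigenvectorBasis, hi])
    refine ⟨t, ?_, ht⟩
    have := hN.dotProduct_eigenvectorBasis i i
    rwa [if_pos rfl, ht, smul_dotProduct, dotProduct_smul, hξ, smul_eq_mul, smul_eq_mul,
      mul_one] at this
  obtain ⟨i₀, hi₀⟩ := hN.exists_eigenvalues_eq (fun h => by simp [h] at hξ) hNξ
  have hfilter : (Finset.univ.filter fun i => hN.eigenvalues i = μ) = {i₀} := by
    refine Finset.eq_singleton_iff_unique_mem.mpr ⟨by simpa using hi₀, fun i hi => ?_⟩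
    by_contra hne
    obtain ⟨t, ht1, ht⟩ := hcol i (Finset.mem_filter.mp hi).2
    obtain ⟨s, hs1, hs⟩ := hcol i₀ hi₀
    have hts := hN.dotProduct_eigenvectorBasis i i₀
    rw [if_neg hne, ht, hs, smul_dotProduct, dotProduct_smul, hξ, smul_eq_mul, smul_eq_mul,
      mul_one] at hts
    have : (t * t) * (s * s) = 0 := by rw [mul_mul_mul_comm, hts, zero_mul]
    simp [ht1, hs1] at this
  obtain ⟨t, ht1, ht⟩ := hcol i₀ hi₀
  rw [hfilter, Finset.sum_singleton, ht, smul_dotProduct, smul_eq_mul, mul_pow, sq t, ht1,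
    one_mul]

end IsHermitian

end Matrix

section Cauchy

open Complex

/-- A point of `(-∞, 0]` in the disk could be pushed left along the ray until it meets the
circle. -/
lemma closedBall_subset_slitPlane {c : ℂ} {R : ℝ} (h : sphere c R ⊆ slitPlane) :
    closedBall c R ⊆ slitPlane := by
  open scoped ComplexOrder in
  intro z hz
  by_contra hzs
  rw [mem_slitPlane_iff_not_le_zero, not_not] at hzs
  have hR : dist z c ≤ R := mem_closedBall.mp hz
  obtain ⟨t, ht, htR⟩ : ∃ t ∈ Set.Icc (0 : ℝ) (dist z c + R), dist (z - t) c = R := by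
    refine intermediate_value_Icc (by linarith [dist_nonneg (x := z) (y := c)])
      (by fun_prop) ⟨by simpa using hR, ?_⟩
    have h1 := dist_triangle (z - ((dist z c + R : ℝ) : ℂ)) c z
    rw [dist_comm c z, dist_eq_norm (z - _), sub_sub_cancel_left, norm_neg, Complex.norm_real,
      Real.norm_of_nonneg (by linarith [dist_nonneg (x := z) (y := c)])] at h1
    linarith
  exact mem_slitPlane_iff_not_le_zero.mp (h (mem_sphere.mpr htR))
    (sub_nonpos.mpr (hzs.trans (by exact_mod_cast ht.1)))

lemma diffContOnCl_cpow_const {c : ℂ} {R : ℝ} (h : closedBall c R ⊆ slitPlane) (s : ℂ) :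
    DiffContOnCl ℂ (fun z => z ^ s) (ball c R) :=
  DifferentiableOn.diffContOnCl fun _ hz =>
    (differentiableAt_id.cpow_const
      (h (closure_ball_subset_closedBall hz))).differentiableWithinAt

variable {E : Type*} [NormedAddCommGroup E] [NormedSpace ℂ E] [CompleteSpace E]

open Classical in
lemma circleIntegral_sub_inv_smul_eq_ite {f : ℂ → E} {c a : ℂ} {R : ℝ} (hR : 0 ≤ R)
    (hf : DiffContOnCl ℂ f (ball c R)) (ha : a ∉ sphere c R) :
    (∮ z in C(c, R), (z - a)⁻¹ • f z) =
      if a ∈ ball c R then (2 * Real.pi * I : ℂ) • f a else 0 := by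
  split_ifs with hin
  · exact hf.circleIntegral_sub_inv_smul hin
  · have hout : a ∉ closedBall c R := by
      rw [← ball_union_sphere]
      exact fun h => h.elim hin ha
    refine DiffContOnCl.circleIntegral_eq_zero hR
      ((((differentiable_id.diffContOnCl).sub_const a).inv fun z hz => ?_).smul hf)
    exact sub_ne_zero.mpr fun h => hout (h ▸ closure_ball_subset_closedBall hz)

open Classical in
lemma circleIntegral_sum_smul_sub_inv_smul {ι : Type*} (s : Finset ι) {f : ℂ → E} {c : ℂ} {R : ℝ}
    (hR : 0 ≤ R) (hf : DiffContOnCl ℂ f (ball c R)) (a μ : ι → ℂ)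
    (hμ : ∀ i ∈ s, μ i ∉ sphere c R) :
    (∮ z in C(c, R), ∑ i ∈ s, a i • (z - μ i)⁻¹ • f z) =
      (2 * Real.pi * I : ℂ) • ∑ i ∈ s with μ i ∈ ball c R, a i • f (μ i) := by
  have hint : ∀ i ∈ s, CircleIntegrable (fun z => a i • (z - μ i)⁻¹ • f z) c R := by
    intro i hi
    refine ContinuousOn.circleIntegrable hR (continuousOn_const.smul
      (((continuousOn_id.sub continuousOn_const).inv₀ fun z hz => ?_).smul
        (hf.continuousOn_ball.mono sphere_subset_closedBall)))
    exact sub_ne_zero.mpr (show z ≠ μ i from fun h => hμ i hi (h ▸ hz))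
  rw [circleIntegral.integral_fun_sum hint, Finset.sum_filter, Finset.smul_sum]
  refine Finset.sum_congr rfl fun i hi => ?_
  rw [circleIntegral.integral_smul, circleIntegral_sub_inv_smul_eq_ite hR hf (hμ i hi)]
  split_ifs <;> simp [smul_comm (a i)]

end Cauchy

section Linearization

open Complex

lemma cpow_one_half_mul_self (z : ℂ) : z ^ (1 / 2 : ℂ) * z ^ (1 / 2 : ℂ) = z := by
  rw [← sq, one_div]
  exact cpow_ofNat_inv_pow z 2

lemma linearization_schur_complement_eq {m n : Type*} [Fintype n] [DecidableEq m]
    (X : Matrix n m ℂ) {z : ℂ} (hz : z ≠ 0) :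
    -z • (1 : Matrix m m ℂ) - (-z)⁻¹ • (z ^ (1 / 2 : ℂ) • Xᵀ * (z ^ (1 / 2 : ℂ) • X)) =
      Xᵀ * X - z • 1 := by
  rw [Matrix.smul_mul, Matrix.mul_smul, smul_smul, smul_smul, mul_assoc, cpow_one_half_mul_self,
    inv_neg, neg_mul, inv_mul_cancel₀ hz]
  module

variable {m n : Type*} [DecidableEq m] [DecidableEq n]

/-- `linG X z` is `(linearization X z)⁻¹` by definition. -/
noncomputable def linearization (X : Matrix n m ℂ) (z : ℂ) : Matrix (m ⊕ n) (m ⊕ n) ℂ :=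
  z ^ (1 / 2 : ℂ) • Matrix.dilation X - z • 1

lemma linearization_eq_fromBlocks (X : Matrix n m ℂ) (z : ℂ) :
    linearization X z =
      fromBlocks (-z • 1) (z ^ (1 / 2 : ℂ) • Xᵀ) (z ^ (1 / 2 : ℂ) • X) (-z • 1) := by
  have h := Matrix.smul_dilation_sub_smul_one X (z ^ (1 / 2 : ℂ))
  rwa [cpow_one_half_mul_self] at h

variable [Fintype m] [Fintype n]

lemma isUnit_linearization_iff (X : Matrix n m ℂ) {z : ℂ} (hz : z ≠ 0) :
    IsUnit (linearization X z) ↔ IsUnit (Xᵀ * X - z • 1) := by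
  rw [linearization_eq_fromBlocks,
    Matrix.isUnit_fromBlocks_smul_one₂₂_iff _ _ _ (neg_ne_zero.mpr hz),
    linearization_schur_complement_eq X hz]

lemma toBlocks₁₁_inv_linearization (X : Matrix n m ℂ) {z : ℂ} (hz : z ≠ 0) :
    (linearization X z)⁻¹.toBlocks₁₁ = (Xᵀ * X - z • 1)⁻¹ := by
  rw [linearization_eq_fromBlocks,
    Matrix.toBlocks₁₁_inv_fromBlocks_smul_one₂₂ _ _ _ (neg_ne_zero.mpr hz),
    linearization_schur_complement_eq X hz]

end Linearization

section Model

open Complex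

variable {p r k : ℕ} (Xt : Matrix (Fin r) (Fin p) ℝ) (U : Matrix (Fin p) (Fin k) ℝ)
  (V : Matrix (Fin r) (Fin k) ℝ) {d : Fin k → ℝ}

lemma dBlockC_eq_fromBlocks (d : Fin k → ℝ) :
    dBlockC d = fromBlocks 0 (diagonal fun i => (d i : ℂ)) (diagonal fun i => (d i : ℂ)) 0 := by
  rw [dBlockC, fromBlocks_map, diagonal_map ofReal_zero, Matrix.map_zero _ ofReal_zero]

lemma aBlockC_eq_fromBlocks : aBlockC U V = fromBlocks (U.map ofReal) 0 0 (V.map ofReal) := by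
  rw [aBlockC, fromBlocks_map, Matrix.map_zero _ ofReal_zero, Matrix.map_zero _ ofReal_zero]

lemma dBlockC_mul_fromBlocks_inv (hd : ∀ i, d i ≠ 0) :
    dBlockC d * fromBlocks 0 (diagonal fun i => (d i : ℂ)⁻¹) (diagonal fun i => (d i : ℂ)⁻¹) 0 =
      1 := by
  rw [dBlockC_eq_fromBlocks, fromBlocks_multiply]
  simp [diagonal_mul_diagonal_inv fun i => ofReal_ne_zero.mpr (hd i)]

lemma isUnit_dBlockC (hd : ∀ i, d i ≠ 0) : IsUnit (dBlockC d) :=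
  (isUnit_iff_isUnit_det _).mpr (isUnit_det_of_right_inverse (dBlockC_mul_fromBlocks_inv hd))

lemma inv_dBlockC_apply_inl_inl (hd : ∀ i, d i ≠ 0) (j : Fin k) :
    (dBlockC d)⁻¹ (Sum.inl j) (Sum.inl j) = 0 := by
  rw [inv_eq_right_inv (dBlockC_mul_fromBlocks_inv hd)]
  rfl

lemma masterM_eq_inv_dBlockC_add (z : ℂ) :
    masterM Xt U V d z = (dBlockC d)⁻¹ +
      (z ^ (1 / 2 : ℂ) • (aBlockC U V)ᵀ) * (linearization (Xt.map ofReal) z)⁻¹ * aBlockC U V := by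
  rw [masterM, linG, Matrix.smul_mul, Matrix.smul_mul]
  rfl

lemma linearization_add_aBlockC_mul_dBlockC_mul (d : Fin k → ℝ) (z : ℂ) :
    linearization (Xt.map ofReal) z + aBlockC U V * dBlockC d * (z ^ (1 / 2 : ℂ) • (aBlockC U V)ᵀ) =
      linearization ((Xt + V * diagonal d * Uᵀ).map ofReal) z := by
  have hY : (Xt + V * diagonal d * Uᵀ).map ofReal =
      Xt.map ofReal + V.map ofReal * diagonal (fun i => (d i : ℂ)) * (U.map ofReal)ᵀ := by
    rw [Matrix.map_add _ ofReal_add, map_ofReal_mul, map_ofReal_mul, diagonal_map ofReal_zero,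
      transpose_map]
  rw [linearization, linearization, hY,
    Matrix.dilation_add_mul_mul_transpose _ _ _ _ (diagonal_transpose _), ← aBlockC_eq_fromBlocks,
    ← dBlockC_eq_fromBlocks, Matrix.mul_smul, smul_add]
  abel

variable {Xt U V} {z : ℂ} (hd : ∀ i, d i ≠ 0) (hz : z ≠ 0)
  (hX : IsUnit ((Xtᵀ * Xt).map ofReal - z • 1)) (hM : IsUnit (masterM Xt U V d z))
include hd hz hX hM

lemma isUnit_linearization_of_isUnit_masterM :
    IsUnit (linearization ((Xt + V * diagonal d * Uᵀ).map ofReal) z) := by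
  rw [← linearization_add_aBlockC_mul_dBlockC_mul]
  refine Matrix.isUnit_add_mul_mul _ _ _ _ ?_ (isUnit_dBlockC hd)
    (by rwa [← masterM_eq_inv_dBlockC_add])
  rwa [isUnit_linearization_iff _ hz, ← transpose_map, ← map_ofReal_mul]

lemma isUnit_map_ofReal_sub_smul_one_of_isUnit_masterM :
    IsUnit (((Xt + V * diagonal d * Uᵀ)ᵀ * (Xt + V * diagonal d * Uᵀ)).map ofReal - z • 1) := by
  rw [map_ofReal_mul, transpose_map, ← isUnit_linearization_iff _ hz]
  exact isUnit_linearization_of_isUnit_masterM hd hz hX hM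

lemma inv_dBlockC_mul_inv_masterM_mul_inv_dBlockC_apply (j : Fin k) :
    ((dBlockC d)⁻¹ * (masterM Xt U V d z)⁻¹ * (dBlockC d)⁻¹) (Sum.inl j) (Sum.inl j) =
      -z ^ (1 / 2 : ℂ) * ((ofReal ∘ fun a => U a j) ⬝ᵥ
        (((Xt + V * diagonal d * Uᵀ)ᵀ * (Xt + V * diagonal d * Uᵀ)).map ofReal - z • 1)⁻¹ *ᵥ
          (ofReal ∘ fun a => U a j)) := by
  have hB : IsUnit (linearization (Xt.map ofReal) z) := by
    rwa [isUnit_linearization_iff _ hz, ← transpose_map, ← map_ofReal_mul]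
  rw [masterM_eq_inv_dBlockC_add, Matrix.inv_mul_inv_add_mul_inv_mul_inv_mul_inv _ _ _ _ hB
    (isUnit_dBlockC hd) (by rwa [← masterM_eq_inv_dBlockC_add]),
    linearization_add_aBlockC_mul_dBlockC_mul, Matrix.sub_apply, inv_dBlockC_apply_inl_inl hd,
    Matrix.smul_mul, Matrix.smul_mul, Matrix.smul_apply, aBlockC_eq_fromBlocks,
    Matrix.fromBlocks_transpose_mul_mul_fromBlocks_apply_inl, toBlocks₁₁_inv_linearization _ hz,
    map_ofReal_mul, transpose_map, smul_eq_mul, zero_sub, neg_mul]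
  rfl

lemma single_dotProduct_inv_masterM_mulVec_single_eq_sum
    (hN : ((Xt + V * diagonal d * Uᵀ)ᵀ * (Xt + V * diagonal d * Uᵀ)).IsHermitian) (j : Fin k) :
    (fun s : Fin k ⊕ Fin k => if s = Sum.inl j then (1 : ℂ) else 0) ⬝ᵥ
        ((dBlockC d)⁻¹ * (masterM Xt U V d z)⁻¹ * (dBlockC d)⁻¹) *ᵥ
          (fun s : Fin k ⊕ Fin k => if s = Sum.inl j then (1 : ℂ) else 0) =
      ∑ i, ((⇑(hN.eigenvectorBasis i) ⬝ᵥ fun a => U a j : ℝ) : ℂ) ^ 2 •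
        (z - hN.eigenvalues i)⁻¹ • z ^ (1 / 2 : ℂ) := by
  have he : (fun s : Fin k ⊕ Fin k => if s = Sum.inl j then (1 : ℂ) else 0) =
      Pi.single (Sum.inl j) 1 := funext fun s => (Pi.single_apply _ _ _).symm
  have hev := (hN.isUnit_map_ofReal_sub_smul_one_iff z).mp
    (isUnit_map_ofReal_sub_smul_one_of_isUnit_masterM hd hz hX hM)
  rw [he, mulVec_single_one, single_one_dotProduct, col_apply,
    inv_dBlockC_mul_inv_masterM_mul_inv_dBlockC_apply hd hz hX hM,
    hN.dotProduct_inv_map_ofReal_sub_smul_one_mulVec _ hev, Finset.mul_sum]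
  refine Finset.sum_congr rfl fun i _ => ?_
  rw [smul_eq_mul, smul_eq_mul, ← neg_sub, inv_neg]
  ring

end Model

section MasterIntegral

open Complex

variable {p r k : ℕ} {Xt : Matrix (Fin r) (Fin p) ℝ} {U : Matrix (Fin p) (Fin k) ℝ}
  {V : Matrix (Fin r) (Fin k) ℝ} {d : Fin k → ℝ}

open Classical in
lemma circleIntegral_single_dotProduct_inv_masterM_mulVec_single
    (hN : ((Xt + V * diagonal d * Uᵀ)ᵀ * (Xt + V * diagonal d * Uᵀ)).IsHermitian)
    (hd : ∀ i, d i ≠ 0) {c : ℂ} {R : ℝ} (hR : 0 < R) (hslit : closedBall c R ⊆ slitPlane)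
    (hX : ∀ z ∈ sphere c R, IsUnit ((Xtᵀ * Xt).map ofReal - z • 1))
    (hM : ∀ z ∈ sphere c R, IsUnit (masterM Xt U V d z)) (j : Fin k) :
    (∮ z in C(c, R), (fun s : Fin k ⊕ Fin k => if s = Sum.inl j then (1 : ℂ) else 0) ⬝ᵥ
        ((dBlockC d)⁻¹ * (masterM Xt U V d z)⁻¹ * (dBlockC d)⁻¹) *ᵥ
          (fun s : Fin k ⊕ Fin k => if s = Sum.inl j then (1 : ℂ) else 0)) =
      (2 * Real.pi * I : ℂ) • ∑ i with (hN.eigenvalues i : ℂ) ∈ ball c R,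
        ((⇑(hN.eigenvectorBasis i) ⬝ᵥ fun a => U a j : ℝ) : ℂ) ^ 2 •
          (hN.eigenvalues i : ℂ) ^ (1 / 2 : ℂ) := by
  have hz0 : ∀ z ∈ sphere c R, z ≠ 0 := fun z hz =>
    slitPlane_ne_zero (hslit (sphere_subset_closedBall hz))
  have hev : ∀ i, (hN.eigenvalues i : ℂ) ∉ sphere c R := fun i hi =>
    (hN.isUnit_map_ofReal_sub_smul_one_iff _).mp
      (isUnit_map_ofReal_sub_smul_one_of_isUnit_masterM hd (hz0 _ hi) (hX _ hi) (hM _ hi)) i rfl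
  rw [circleIntegral.integral_congr hR.le fun z hz =>
      single_dotProduct_inv_masterM_mulVec_single_eq_sum hd (hz0 z hz) (hX z hz) (hM z hz) hN j]
  exact circleIntegral_sum_smul_sub_inv_smul _ hR.le (diffContOnCl_cpow_const hslit _) _ _
    fun i _ => hev i

end MasterIntegral

/-- **Angle master equation.** Let `Ỹ = X̃ + V D Uᵀ` and let `λ̃ > 0` be a simple
eigenvalue of `ỸᵀỸ` with unit eigenvector `ξ̃`. If `Γ` is a positively oriented circle
in `ℂ ∖ (−∞, 0]` enclosing `λ̃` and no other eigenvalue of `ỸᵀỸ`, with no eigenvalue of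
`X̃ᵀX̃` inside or on `Γ`, and the master matrix invertible on `Γ`, then for each `j`,
`|⟨u_j, ξ̃⟩|² = (2πi λ̃^{1/2})⁻¹ ∮_Γ e_jᵀ 𝒟⁻¹ (𝒟⁻¹ + z^{1/2} Aᵀ G(z) A)⁻¹ 𝒟⁻¹ e_j dz`. -/
theorem angle_master_equation
    {p r k : ℕ}
    (Xt : Matrix (Fin r) (Fin p) ℝ)
    (U : Matrix (Fin p) (Fin k) ℝ) (V : Matrix (Fin r) (Fin k) ℝ)
    (d : Fin k → ℝ) (hd : ∀ i, d i ≠ 0)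
    -- λ̃ is a simple eigenvalue of ỸᵀỸ with unit eigenvector ξ̃
    (lam : ℝ) (hlam_pos : 0 < lam)
    (xi : Fin p → ℝ)
    (hxi_unit : xi ⬝ᵥ xi = 1)
    (hxi_eig :
      ((Xt + V * Matrix.diagonal d * Uᵀ)ᵀ *
        (Xt + V * Matrix.diagonal d * Uᵀ)).mulVec xi = lam • xi)
    (hlam_simple : ∀ v : Fin p → ℝ,
      ((Xt + V * Matrix.diagonal d * Uᵀ)ᵀ *
        (Xt + V * Matrix.diagonal d * Uᵀ)).mulVec v = lam • v →
      ∃ t : ℝ, v = t • xi)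
    -- the contour: a positively oriented circle avoiding (−∞, 0]
    (c : ℂ) (R : ℝ) (hR : 0 < R)
    (hΓ_avoid : ∀ z ∈ sphere c R, ¬(z.im = 0 ∧ z.re ≤ 0))
    -- λ̃ is the only eigenvalue of ỸᵀỸ inside Γ
    (hlam_in : (lam : ℂ) ∈ ball c R)
    (honly : ∀ μ ∈ spectrum ℝ
        ((Xt + V * Matrix.diagonal d * Uᵀ)ᵀ * (Xt + V * Matrix.diagonal d * Uᵀ)),
      (μ : ℂ) ∈ ball c R → μ = lam)
    -- no eigenvalue of X̃ᵀX̃ lies inside or on Γ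
    (hX_out : ∀ μ ∈ spectrum ℝ (Xtᵀ * Xt), (μ : ℂ) ∉ closedBall c R)
    -- the master matrix is invertible on Γ
    (hM_inv : ∀ z ∈ sphere c R, IsUnit (masterM Xt U V d z)) :
    ∀ j : Fin k,
      (((fun i => U i j) ⬝ᵥ xi : ℝ) : ℂ) ^ 2 =
        (2 * Real.pi * Complex.I * (Real.sqrt lam : ℂ))⁻¹ *
          circleIntegral
            (fun z =>
              (fun s : Fin k ⊕ Fin k => if s = Sum.inl j then (1 : ℂ) else 0) ⬝ᵥ
                ((dBlockC d)⁻¹ * (masterM Xt U V d z)⁻¹ * (dBlockC d)⁻¹).mulVec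
                  (fun s : Fin k ⊕ Fin k => if s = Sum.inl j then (1 : ℂ) else 0))
            c R := by
  classical
  intro j
  set Y := Xt + V * diagonal d * Uᵀ
  have hN : (Yᵀ * Y).IsHermitian := by simpa using isHermitian_conjTranspose_mul_self Y
  have hXX : (Xtᵀ * Xt).IsHermitian := by simpa using isHermitian_conjTranspose_mul_self Xt
  have hslit : closedBall c R ⊆ Complex.slitPlane := closedBall_subset_slitPlane fun z hz => by
    simpa [Complex.mem_slitPlane_iff, or_comm, imp_iff_not_or] using hΓ_avoid z hz
  have hX : ∀ z ∈ sphere c R, IsUnit ((Xtᵀ * Xt).map Complex.ofReal - z • 1) := fun z hz =>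
    (hXX.isUnit_map_ofReal_sub_smul_one_iff z).mpr fun i h =>
      hX_out _ (hXX.eigenvalues_mem_spectrum_real i) (h ▸ sphere_subset_closedBall hz)
  have hball : ∀ i, (hN.eigenvalues i : ℂ) ∈ ball c R ↔ hN.eigenvalues i = lam := fun i =>
    ⟨honly _ (hN.eigenvalues_mem_spectrum_real i), fun h => h ▸ hlam_in⟩
  have hsqrt : ((Real.sqrt lam : ℝ) : ℂ) = (lam : ℂ) ^ (1 / 2 : ℂ) := by
    rw [Real.sqrt_eq_rpow, Complex.ofReal_cpow hlam_pos.le]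
    norm_num
  have hsum : ∑ i with hN.eigenvalues i = lam,
      ((⇑(hN.eigenvectorBasis i) ⬝ᵥ fun a => U a j : ℝ) : ℂ) ^ 2 •
        (hN.eigenvalues i : ℂ) ^ (1 / 2 : ℂ) =
      (((fun i => U i j) ⬝ᵥ xi : ℝ) : ℂ) ^ 2 * (Real.sqrt lam : ℂ) := by
    rw [Finset.sum_congr rfl fun i hi => by rw [(Finset.mem_filter.mp hi).2], ← Finset.sum_smul,
      hsqrt, dotProduct_comm _ xi, ← Complex.ofReal_pow,
      ← hN.sum_sq_dotProduct_eigenvectorBasis_of_simple hxi_unit hxi_eig hlam_simple]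
    push_cast
    rfl
  rw [circleIntegral_single_dotProduct_inv_masterM_mulVec_single hN hd hR hslit hX hM_inv,
    Finset.filter_congr fun i _ => hball i, hsum, smul_eq_mul]
  have hsqrt_ne : (Real.sqrt lam : ℂ) ≠ 0 := by exact_mod_cast (Real.sqrt_pos.mpr hlam_pos).ne'
  field_simp
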